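/- Let n_1 be a Carmichael number of even index (class A) and n_2 a Carmichael number of odd index (class B), with gcd(n_1, n_2) = 1, and suppose v_2(n_1 − 1) = v_2(n_2 − 1). If the product n = n_1 n_2 is a Carmichael number, then n has even index (is in class A). -/

import Mathlib

/-!
Write `v = v₂(n₁ - 1) = v₂(n₂ - 1)`; Carmichael numbers are odd, so `v ≥ 1`. Then
`n₁ n₂ - 1 = (n₁ - 1) n₂ + (n₂ - 1) = 2^v (a n₂ + b)` with `a`, `b`, `n₂` odd, so
`v₂(n₁ n₂ - 1) > v`. On the other side `λ(n₁ n₂) ∣ lcm(λ(n₁), λ(n₂)) ∣ lcm(n₁ - 1, n₂ - 1)`,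
whose 2-adic valuation is `v`. Hence `2 ∣ (n₁ n₂ - 1) / λ(n₁ n₂)`.
-/

open scoped Classical

/-- The Carmichael lambda function: the least `ℓ > 0` with `a ^ ℓ ≡ 1 (mod n)`
for all `a` coprime to `n`. -/
noncomputable def carmichaelLambda (n : ℕ) : ℕ :=
  sInf {ℓ : ℕ | 0 < ℓ ∧ ∀ a : ℕ, Nat.Coprime a n → a ^ ℓ ≡ 1 [MOD n]}

/-- A Carmichael number: a composite `n` with `a ^ (n-1) ≡ 1 (mod n)`
for all `a` coprime to `n`. -/
def IsCarmichael (n : ℕ) : Prop :=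
  1 < n ∧ ¬ n.Prime ∧ ∀ a : ℕ, Nat.Coprime a n → a ^ (n - 1) ≡ 1 [MOD n]

/-- The Euler liars for `n`, as residues in `{0, …, n-1}` coprime to `n` with
`(a/n) ≡ a ^ ((n-1)/2) (mod n)`. -/
noncomputable def eulerLiars (n : ℕ) : Finset ℕ :=
  (Finset.range n).filter
    (fun a => Nat.Coprime a n ∧ (jacobiSym (a : ℤ) n ≡ (a : ℤ) ^ ((n - 1) / 2) [ZMOD n]))

lemma pow_modEq_one_of_dvd {a k l n : ℕ} (h : a ^ k ≡ 1 [MOD n]) (hkl : k ∣ l) :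
    a ^ l ≡ 1 [MOD n] := by
  obtain ⟨c, rfl⟩ := hkl
  simpa [pow_mul] using h.pow c

section CarmichaelLambda

-- Euler's theorem provides an admissible exponent; for `n = 0` only `a = 1` is coprime to `n`.
lemma exists_pos_forall_pow_modEq_one (n : ℕ) :
    ∃ ℓ, 0 < ℓ ∧ ∀ a : ℕ, Nat.Coprime a n → a ^ ℓ ≡ 1 [MOD n] := by
  rcases n.eq_zero_or_pos with rfl | hn
  · exact ⟨1, one_pos, fun a ha => by rw [(Nat.coprime_zero_right a).mp ha, one_pow]⟩
  · exact ⟨n.totient, Nat.totient_pos.mpr hn, fun a ha => Nat.ModEq.pow_totient ha⟩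

lemma carmichaelLambda_spec (n : ℕ) :
    0 < carmichaelLambda n ∧ ∀ a : ℕ, Nat.Coprime a n → a ^ carmichaelLambda n ≡ 1 [MOD n] :=
  Nat.sInf_mem (exists_pos_forall_pow_modEq_one n)

lemma carmichaelLambda_dvd {n ℓ : ℕ} (h : ∀ a : ℕ, Nat.Coprime a n → a ^ ℓ ≡ 1 [MOD n]) :
    carmichaelLambda n ∣ ℓ := by
  obtain ⟨hpos, hpow⟩ := carmichaelLambda_spec n
  set m := carmichaelLambda n
  refine Nat.dvd_of_mod_eq_zero (Nat.eq_zero_of_not_pos fun hr => ?_)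
  have hmod : ∀ a : ℕ, Nat.Coprime a n → a ^ (ℓ % m) ≡ 1 [MOD n] := fun a ha =>
    calc a ^ (ℓ % m) = 1 ^ (ℓ / m) * a ^ (ℓ % m) := by rw [one_pow, one_mul]
      _ ≡ (a ^ m) ^ (ℓ / m) * a ^ (ℓ % m) [MOD n] := (((hpow a ha).pow _).symm.mul_right _)
      _ = a ^ ℓ := by rw [← pow_mul, ← pow_add, Nat.div_add_mod]
      _ ≡ 1 [MOD n] := h a ha
  exact (Nat.mod_lt ℓ hpos).not_ge (Nat.sInf_le ⟨hr, hmod⟩)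

lemma carmichaelLambda_mul_dvd_lcm {m n : ℕ} (h : Nat.Coprime m n) :
    carmichaelLambda (m * n) ∣ Nat.lcm (carmichaelLambda m) (carmichaelLambda n) :=
  carmichaelLambda_dvd fun a ha => (Nat.modEq_and_modEq_iff_modEq_mul h).mp
    ⟨pow_modEq_one_of_dvd ((carmichaelLambda_spec m).2 a ha.coprime_mul_right_right)
        (Nat.dvd_lcm_left _ _),
      pow_modEq_one_of_dvd ((carmichaelLambda_spec n).2 a ha.coprime_mul_left_right)
        (Nat.dvd_lcm_right _ _)⟩

end CarmichaelLambda

namespace IsCarmichael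

variable {n : ℕ}

lemma carmichaelLambda_dvd_sub_one (h : IsCarmichael n) : carmichaelLambda n ∣ n - 1 :=
  carmichaelLambda_dvd h.2.2

-- For even `n > 2`, the base `a = n - 1` gives `(-1) ^ (n - 1) = -1 ≠ 1` in `ZMod n`.
lemma odd (h : IsCarmichael n) : Odd n := by
  obtain ⟨hn1, hnp, hpow⟩ := h
  by_contra hodd
  have : Fact (2 < n) := ⟨by
    have : n ≠ 2 := by rintro rfl; exact hnp Nat.prime_two
    omega⟩
  have hcop : Nat.Coprime (n - 1) n :=
    (Nat.coprime_self_sub_left hn1.le).mpr (Nat.coprime_one_left n)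
  have hzmod := (ZMod.natCast_eq_natCast_iff _ _ n).mpr (hpow (n - 1) hcop)
  have hsub : Odd (n - 1) := Nat.Even.sub_odd hn1.le (Nat.not_odd_iff_even.mp hodd) odd_one
  rw [Nat.cast_pow, Nat.cast_sub hn1.le, ZMod.natCast_self, Nat.cast_one, zero_sub,
    hsub.neg_one_pow] at hzmod
  exact ZMod.neg_one_ne_one hzmod

end IsCarmichael

section TwoAdic

lemma padicValNat_le_of_dvd {p a b : ℕ} [Fact p.Prime] (hb : b ≠ 0) (h : a ∣ b) :
    padicValNat p a ≤ padicValNat p b :=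
  (padicValNat_dvd_iff_le hb).mp (pow_padicValNat_dvd.trans h)

lemma padicValNat_lcm {p a b : ℕ} [Fact p.Prime] (ha : a ≠ 0) (hb : b ≠ 0) :
    padicValNat p (Nat.lcm a b) = max (padicValNat p a) (padicValNat p b) := by
  simp only [← Nat.factorization_def _ Fact.out, Nat.factorization_lcm ha hb, Finsupp.sup_apply]

lemma exists_eq_two_pow_padicValNat_mul_odd {n : ℕ} (hn : n ≠ 0) :
    ∃ a, Odd a ∧ n = 2 ^ padicValNat 2 n * a := by
  obtain ⟨a, ha⟩ := pow_padicValNat_dvd (p := 2) (n := n)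
  refine ⟨a, Nat.odd_iff.mpr ?_, ha⟩
  by_contra heven
  obtain ⟨c, hc⟩ : 2 ∣ a := by omega
  exact pow_succ_padicValNat_not_dvd hn ⟨c, ha.trans (by rw [hc, pow_succ, mul_assoc])⟩

lemma even_div_of_padicValNat_lt {l N : ℕ} (hl : l ∣ N) (hN : N ≠ 0)
    (h : padicValNat 2 l < padicValNat 2 N) : Even (N / l) := by
  obtain ⟨k, rfl⟩ := hl
  obtain ⟨hl0, hk0⟩ := mul_ne_zero_iff.mp hN
  rw [padicValNat.mul hl0 hk0] at h
  rw [Nat.mul_div_cancel_left _ (Nat.pos_of_ne_zero hl0)]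
  exact even_iff_two_dvd.mpr (dvd_of_one_le_padicValNat (by omega))

lemma padicValNat_two_sub_one_lt_mul_sub_one {m n : ℕ} (hm : Odd m) (hm1 : 1 < m)
    (h : padicValNat 2 (m - 1) = padicValNat 2 (n - 1)) :
    padicValNat 2 (m - 1) < padicValNat 2 (m * n - 1) := by
  set v := padicValNat 2 (m - 1)
  have hv : 1 ≤ v := one_le_padicValNat_of_dvd (by omega) (Nat.Odd.sub_odd hm odd_one).two_dvd
  have hn1 : n - 1 ≠ 0 := fun h0 => by rw [h0, padicValNat_zero_right] at h; omega
  obtain ⟨a, ha, hma⟩ := exists_eq_two_pow_padicValNat_mul_odd (n := m - 1) (by omega)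
  obtain ⟨b, hb, hnb⟩ := exists_eq_two_pow_padicValNat_mul_odd hn1
  rw [← h] at hnb
  have hn : Odd n := by
    have : 2 ∣ n - 1 := (dvd_pow_self 2 (by omega)).mul_right b |>.trans hnb.symm.dvd
    exact Nat.odd_iff.mpr (by omega)
  have hsplit : m * n - 1 = 2 ^ v * (a * n + b) := by
    have hn_le : n ≤ m * n := Nat.le_mul_of_pos_left n (by omega)
    rw [show m * n - 1 = (m - 1) * n + (n - 1) by rw [Nat.sub_one_mul]; omega, hma, hnb]
    ring
  obtain ⟨c, hc⟩ := (ha.mul hn).add_odd hb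
  have hdvd : 2 ^ (v + 1) ∣ m * n - 1 := ⟨c, by rw [hsplit, hc, pow_succ]; ring⟩
  have hmn : m * n - 1 ≠ 0 := by
    have : 1 < m * n := Nat.one_lt_mul_iff.mpr ⟨by omega, by omega, by omega⟩
    omega
  exact (padicValNat_dvd_iff_le hmn).mp hdvd

end TwoAdic

theorem product_classA_of_classA_classB_general (n₁ n₂ : ℕ)
    (hc₁ : IsCarmichael n₁) (hc₂ : IsCarmichael n₂) (hcop : Nat.gcd n₁ n₂ = 1)
    (hv : padicValNat 2 (n₁ - 1) = padicValNat 2 (n₂ - 1))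
    (hn : IsCarmichael (n₁ * n₂)) :
    Even ((n₁ * n₂ - 1) / carmichaelLambda (n₁ * n₂)) := by
  have hlt : padicValNat 2 (n₁ - 1) < padicValNat 2 (n₁ * n₂ - 1) :=
    padicValNat_two_sub_one_lt_mul_sub_one hc₁.odd hc₁.1 hv
  have hdvd : carmichaelLambda (n₁ * n₂) ∣ Nat.lcm (n₁ - 1) (n₂ - 1) :=
    (carmichaelLambda_mul_dvd_lcm hcop).trans <| Nat.lcm_dvd
      (hc₁.carmichaelLambda_dvd_sub_one.trans (Nat.dvd_lcm_left _ _))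
      (hc₂.carmichaelLambda_dvd_sub_one.trans (Nat.dvd_lcm_right _ _))
  have hle : padicValNat 2 (carmichaelLambda (n₁ * n₂)) ≤ padicValNat 2 (n₁ - 1) := by
    have hne₁ : n₁ - 1 ≠ 0 := by have := hc₁.1; omega
    have hne₂ : n₂ - 1 ≠ 0 := by have := hc₂.1; omega
    calc padicValNat 2 (carmichaelLambda (n₁ * n₂))
        ≤ padicValNat 2 (Nat.lcm (n₁ - 1) (n₂ - 1)) :=
          padicValNat_le_of_dvd (Nat.lcm_ne_zero hne₁ hne₂) hdvd
      _ = padicValNat 2 (n₁ - 1) := by rw [padicValNat_lcm hne₁ hne₂, ← hv, max_self]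
  exact even_div_of_padicValNat_lt hn.carmichaelLambda_dvd_sub_one
    (by have := hn.1; omega) (by omega)

/-- If `n₁` is a class-A Carmichael number, `n₂` a class-B Carmichael number,
`gcd(n₁, n₂) = 1` and `v₂(n₁-1) = v₂(n₂-1)`, then if `n₁ n₂` is a Carmichael number it
has even index (is in class A). -/
theorem product_classA_of_classA_classB (n₁ n₂ : ℕ)
    (hc₁ : IsCarmichael n₁) (hc₂ : IsCarmichael n₂) (hcop : Nat.gcd n₁ n₂ = 1)
    (he₁ : Even ((n₁ - 1) / carmichaelLambda n₁))
    (ho₂ : Odd ((n₂ - 1) / carmichaelLambda n₂))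
    (hv : padicValNat 2 (n₁ - 1) = padicValNat 2 (n₂ - 1))
    (hn : IsCarmichael (n₁ * n₂)) :
    Even ((n₁ * n₂ - 1) / carmichaelLambda (n₁ * n₂)) :=
  product_classA_of_classA_classB_general n₁ n₂ hc₁ hc₂ hcop hv hn
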